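/- (Normalization of the conditional density (3.5).) Let a1 > a2 be reals, λ > 0, 0 < s < t, and x ∈ (a2 s, a1 s). Then ∫_{x + a2(t−s)}^{x + a1(t−s)} [ p_{t−s}(y − x) + g(s, t−s; x, y − x) ] dy = 1 − e^{−λ(t−s)}; in particular ∫_{a2(t−s)}^{a1(t−s)} g(s, t−s; x, w) dw = 0. -/

import Mathlib

open MeasureTheory ProbabilityTheory Real
open scoped ENNReal

noncomputable section

variable {Ω : Type*}

/-- Generalized Mittag-Leffler function `E^γ_{ν,δ}(x)`, with the convention
`E^0_{ν,δ}(x) = 1/Γ(δ)`. -/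
def mittagLeffler (ν δ γ x : ℝ) : ℝ :=
  if γ = 0 then 1 / Real.Gamma δ
  else ∑' j : ℕ, Real.Gamma (γ + j) / (Real.Gamma γ * j.factorial) * x ^ j / Real.Gamma (ν * j + δ)

/-- Arrival times: `T n = W 0 + ⋯ + W (n-1)`, where `W i` is the `(i+1)`-th waiting time
(so the waiting times are indexed from `0`). -/
def arrival (W : ℕ → Ω → ℝ) (n : ℕ) (ω : Ω) : ℝ := ∑ i ∈ Finset.range n, W i ω

/-- Number of arrivals up to time `u`: `N(u) = #{n ≥ 1 : T n ≤ u}`. -/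
def count (W : ℕ → Ω → ℝ) (u : ℝ) (ω : Ω) : ℕ :=
  Set.ncard {n : ℕ | 1 ≤ n ∧ arrival W n ω ≤ u}

/-- The event `{N(t) = n}`, which coincides with `{T n ≤ t < T (n+1)}`. -/
def countEq (W : ℕ → Ω → ℝ) (n : ℕ) (t : ℝ) : Set Ω :=
  {ω | arrival W n ω ≤ t ∧ t < arrival W (n + 1) ω}

/-- The telegraph process moving with velocity `v0` when `N(r)` is even and `v1` when
`N(r)` is odd. -/
def telegraph (W : ℕ → Ω → ℝ) (v0 v1 : ℝ) (u : ℝ) (ω : Ω) : ℝ :=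
  ∫ r in (0:ℝ)..u, (if Even (count W r ω) then v0 else v1)

/-- Modified Bessel function of the first kind of integer order `ν`. -/
def besselI (ν : ℕ) (x : ℝ) : ℝ :=
  ∑' k : ℕ, (x / 2) ^ (2 * k + ν) / (k.factorial * Real.Gamma (k + 1 + ν))

/-- The density `p_τ(w)` of the absolutely continuous part of the symmetric-rate telegraph
process with uniform random initial velocity. -/
def tdensity (lam a1 a2 τ w : ℝ) : ℝ :=
  lam * Real.exp (-(lam * τ)) / (a1 - a2) *
    (besselI 0 (2 * lam / (a1 - a2) * Real.sqrt ((a1 * τ - w) * (w - a2 * τ))) +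
      (a1 - a2) * τ / (2 * Real.sqrt ((a1 * τ - w) * (w - a2 * τ))) *
        besselI 1 (2 * lam / (a1 - a2) * Real.sqrt ((a1 * τ - w) * (w - a2 * τ))))

/-- The correction term `g(s, τ; x, w)` of formula (3.6). -/
def gfun (lam a1 a2 s τ x w : ℝ) : ℝ :=
  lam * Real.exp (-(lam * τ)) / (2 * (a1 - a2) ^ 2 * s) *
    (4 * x * w + (a1 + a2) * ((a1 + a2) * s * τ - 2 * s * w - 2 * τ * x)) *
    besselI 1 (2 * lam / (a1 - a2) * Real.sqrt ((a1 * τ - w) * (w - a2 * τ))) /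
    Real.sqrt ((a1 * τ - w) * (w - a2 * τ))


section AuxNormalization


lemma refl_integral_zero {a b : ℝ} (f : ℝ → ℝ) (hf : ∀ w, f (a + b - w) = - f w) :
    ∫ w in a..b, f w = 0 := by
  have h := intervalIntegral.integral_comp_sub_left (a := a) (b := b) f (a + b)
  simp only [add_sub_cancel_right, add_sub_cancel_left] at h
  have h2 : (∫ x in a..b, f (a + b - x)) = ∫ x in a..b, (- f x) := by
    simp_rw [hf]
  rw [h2, intervalIntegral.integral_neg] at h
  linarith

lemma beta_nat : ∀ (n m : ℕ), (∫ x in (0:ℝ)..1, x ^ m * (1 - x) ^ n)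
    = (m.factorial * n.factorial : ℝ) / (m + n + 1).factorial := by
  intro n
  induction n with
  | zero =>
    intro m
    have h1 : ((m + 0 + 1).factorial : ℝ) = (m + 1) * m.factorial := by
      simp [Nat.factorial_succ]
    simp only [pow_zero, mul_one, integral_pow, h1, Nat.factorial_zero]
    have hm : (m.factorial : ℝ) ≠ 0 := Nat.cast_ne_zero.mpr (Nat.factorial_ne_zero _)
    field_simp
    simp
  | succ n ih =>
    intro m
    have key : (∫ x in (0:ℝ)..1,
        ((m+1 : ℝ) * (x ^ m * (1 - x) ^ (n+1)) - (n+1 : ℝ) * (x ^ (m+1) * (1 - x) ^ n)))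
        = 0 := by
      have hderiv : ∀ y ∈ Set.uIcc (0:ℝ) 1,
          HasDerivAt (fun z : ℝ => z ^ (m+1) * (1 - z) ^ (n+1))
            ((m+1 : ℝ) * (y ^ m * (1 - y) ^ (n+1)) - (n+1 : ℝ) * (y ^ (m+1) * (1 - y) ^ n)) y := by
        intro y _
        have h1 : HasDerivAt (fun z : ℝ => z ^ (m+1)) ((m+1 : ℝ) * y ^ m) y := by
          simpa using hasDerivAt_pow (m+1) y
        have h2 : HasDerivAt (fun z : ℝ => (1 - z) ^ (n+1))
            (-((n+1 : ℝ) * (1 - y) ^ n)) y := by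
          have h3 : HasDerivAt (fun z : ℝ => 1 - z) (-1) y := by
            simpa using (hasDerivAt_id y).const_sub 1
          have := h3.fun_pow (n+1)
          refine this.congr_deriv ?_
          push_cast
          ring
        have := h1.fun_mul h2
        refine this.congr_deriv ?_
        push_cast
        ring
      have hcont : IntervalIntegrable
          (fun y : ℝ => (m+1 : ℝ) * (y ^ m * (1 - y) ^ (n+1)) - (n+1 : ℝ) * (y ^ (m+1) * (1 - y) ^ n))
          volume 0 1 := by
        apply Continuous.intervalIntegrable
        fun_prop
      rw [intervalIntegral.integral_eq_sub_of_hasDerivAt hderiv hcont]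
      norm_num
    have hi1 : IntervalIntegrable (fun x : ℝ => x ^ m * (1 - x) ^ (n+1)) volume 0 1 :=
      (by fun_prop : Continuous fun x : ℝ => x ^ m * (1 - x) ^ (n+1)).intervalIntegrable _ _
    have hi2 : IntervalIntegrable (fun x : ℝ => x ^ (m+1) * (1 - x) ^ n) volume 0 1 :=
      (by fun_prop : Continuous fun x : ℝ => x ^ (m+1) * (1 - x) ^ n).intervalIntegrable _ _
    have expand : (∫ x in (0:ℝ)..1,
        ((m+1 : ℝ) * (x ^ m * (1 - x) ^ (n+1)) - (n+1 : ℝ) * (x ^ (m+1) * (1 - x) ^ n)))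
        = (m+1 : ℝ) * (∫ x in (0:ℝ)..1, x ^ m * (1 - x) ^ (n+1))
          - (n+1 : ℝ) * (∫ x in (0:ℝ)..1, x ^ (m+1) * (1 - x) ^ n) := by
      rw [intervalIntegral.integral_sub (hi1.const_mul _) (hi2.const_mul _),
        intervalIntegral.integral_const_mul, intervalIntegral.integral_const_mul]
    rw [expand, ih (m+1)] at key
    have hfac : ((m + 1 + n + 1).factorial : ℝ) ≠ 0 := Nat.cast_ne_zero.mpr (Nat.factorial_ne_zero _)
    have hrw : (m + (n+1) + 1) = (m + 1 + n + 1) := by omega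
    rw [hrw]
    have h2 : ((m+1).factorial : ℝ) = (m+1) * m.factorial := by
      simp [Nat.factorial_succ]
    have h3 : ((n+1).factorial : ℝ) = (n+1) * n.factorial := by
      simp [Nat.factorial_succ]
    have hm1 : (0:ℝ) < (m:ℝ) + 1 := by positivity
    field_simp [h2, h3] at key ⊢
    nlinarith [key, (Nat.cast_pos (α := ℝ)).mpr (Nat.factorial_pos (m+1+n+1)), hm1]

lemma besselI0_eq (z : ℝ) :
    besselI 0 z = ∑' k : ℕ, (z / 2) ^ (2 * k) / (k.factorial * k.factorial) := by
  unfold besselI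
  refine tsum_congr fun k => ?_
  rw [show ((k : ℝ) + 1 + ((0:ℕ) : ℝ)) = (k : ℝ) + 1 by push_cast; ring,
    Real.Gamma_nat_eq_factorial]
  norm_num

lemma besselI1_eq (z : ℝ) :
    besselI 1 z = ∑' k : ℕ, (z / 2) ^ (2 * k + 1) / (k.factorial * (k+1).factorial) := by
  unfold besselI
  refine tsum_congr fun k => ?_
  rw [show ((k : ℝ) + 1 + ((1:ℕ) : ℝ)) = ((k + 1 : ℕ) : ℝ) + 1 by push_cast; ring,
    Real.Gamma_nat_eq_factorial]

lemma summable_sq_factorial {y : ℝ} (hy : 0 ≤ y) :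
    Summable (fun k : ℕ => y ^ k / (k.factorial * k.factorial) : ℕ → ℝ) := by
  refine Summable.of_nonneg_of_le (fun k => by positivity) (fun k => ?_)
    (Real.summable_pow_div_factorial y)
  have h1 : (1 : ℝ) ≤ (k.factorial : ℝ) := by exact_mod_cast Nat.one_le_iff_ne_zero.mpr k.factorial_ne_zero
  have h0 : (0 : ℝ) < (k.factorial : ℝ) := by positivity
  gcongr
  exact le_mul_of_one_le_right h0.le h1

lemma summable_succ_factorial {y : ℝ} (hy : 0 ≤ y) :
    Summable (fun k : ℕ => y ^ k / (k.factorial * (k+1).factorial) : ℕ → ℝ) := by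
  refine Summable.of_nonneg_of_le (fun k => by positivity) (fun k => ?_)
    (Real.summable_pow_div_factorial y)
  have h1 : (1 : ℝ) ≤ ((k+1).factorial : ℝ) := by
    exact_mod_cast Nat.one_le_iff_ne_zero.mpr (k+1).factorial_ne_zero
  have h0 : (0 : ℝ) < (k.factorial : ℝ) := by positivity
  gcongr
  exact le_mul_of_one_le_right h0.le h1

lemma sum_exp_split (u : ℝ) :
    ∑' k : ℕ, (u ^ (2*k+1) / (2*k+1).factorial + u ^ (2*k+2) / (2*k+2).factorial : ℝ)
      = Real.exp u - 1 := by
  set g : ℕ → ℝ := fun n => u ^ (n+1) / (n+1).factorial with hg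
  have hgs : Summable g := by
    have := Real.summable_pow_div_factorial u
    exact ((summable_nat_add_iff 1).mpr this :)
  have he : Summable fun k : ℕ => g (2 * k) :=
    hgs.comp_injective (fun m n h => by omega)
  have ho : Summable fun k : ℕ => g (2 * k + 1) :=
    hgs.comp_injective (fun m n h => by omega)
  have hsplit := tsum_even_add_odd he ho
  have hgeq : ∀ k : ℕ, (u ^ (2*k+1) / (2*k+1).factorial + u ^ (2*k+2) / (2*k+2).factorial : ℝ)
      = g (2 * k) + g (2 * k + 1) := by
    intro k
    simp only [hg]
  rw [tsum_congr hgeq, Summable.tsum_add he ho, hsplit]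
  have hexp : Real.exp u = ∑' n : ℕ, u ^ n / n.factorial := by
    rw [Real.exp_eq_exp_ℝ, NormedSpace.exp_eq_tsum_div]
  have hzero := Summable.tsum_eq_zero_add (Real.summable_pow_div_factorial u)
  rw [hexp, hzero]
  simp [hg]


lemma beta_scaled {a b : ℝ} (hab : a < b) (k : ℕ) :
    (∫ w in a..b, ((b - w) * (w - a)) ^ k)
      = (b - a) ^ (2 * k + 1) * (k.factorial * k.factorial) / (2 * k + 1).factorial := by
  have hL : (b - a) ≠ 0 := sub_ne_zero.2 hab.ne'
  have h0 := intervalIntegral.integral_comp_mul_add (a := 0) (b := 1)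
      (f := fun w => ((b - w) * (w - a)) ^ k) hL a
  simp only [mul_zero, zero_add, mul_one, sub_add_cancel] at h0
  have h1 : ∀ x : ℝ, ((b - ((b - a) * x + a)) * ((b - a) * x + a - a)) ^ k
      = (b - a) ^ (2 * k) * (x ^ k * (1 - x) ^ k) := by
    intro x
    rw [show (b - ((b - a) * x + a)) * ((b - a) * x + a - a) = (b - a) ^ 2 * (x * (1 - x)) by ring,
      mul_pow, mul_pow, ← pow_mul]
  simp only [h1] at h0
  rw [intervalIntegral.integral_const_mul, beta_nat k k,
    show k + k + 1 = 2 * k + 1 from by omega] at h0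
  rw [eq_comm, inv_smul_eq_iff₀ hL] at h0
  rw [h0, smul_eq_mul, pow_succ]
  field_simp

end AuxNormalization

set_option maxHeartbeats 1000000 in
/-- normalization of the conditional density (3.5), and vanishing integral
of the correction term `g`. -/
theorem cond_density_normalization (lam a1 a2 s t x : ℝ) (ha : a2 < a1) (hlam : 0 < lam)
    (hs : 0 < s) (hst : s < t) (hx : x ∈ Set.Ioo (a2 * s) (a1 * s)) :
    (∫ y in (x + a2 * (t - s))..(x + a1 * (t - s)),
        (tdensity lam a1 a2 (t - s) (y - x) + gfun lam a1 a2 s (t - s) x (y - x))) =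
      1 - Real.exp (-(lam * (t - s))) ∧
    (∫ w in (a2 * (t - s))..(a1 * (t - s)), gfun lam a1 a2 s (t - s) x w) = 0 := by
  have hτ0 : 0 < t - s := sub_pos.2 hst
  set τ := t - s with hτdef
  clear_value τ
  have hτ : 0 < τ := hτ0
  have hd : (0:ℝ) < a1 - a2 := sub_pos.2 ha
  set a := a2 * τ with hadef
  clear_value a
  set b := a1 * τ with hbdef
  clear_value b
  have hab : a < b := by
    rw [hadef, hbdef]; exact mul_lt_mul_of_pos_right ha hτ
  set L := (a1 - a2) * τ with hLdef
  clear_value L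
  have hL : 0 < L := by rw [hLdef]; exact mul_pos hd hτ
  have hLab : b - a = L := by rw [hadef, hbdef, hLdef]; ring
  set c := 2 * lam / (a1 - a2) with hcdef
  clear_value c
  have hc : 0 < c := by rw [hcdef]; exact div_pos (by linarith) hd
  set u := lam * τ with hudef
  clear_value u
  have hu : 0 < u := by rw [hudef]; exact mul_pos hlam hτ
  have hcL : c * L / 2 = u := by
    rw [hcdef, hLdef, hudef]; field_simp
  -- symmetry facts
  have hsymh : ∀ w : ℝ, (a1 * τ - (a + b - w)) * ((a + b - w) - a2 * τ)
      = (a1 * τ - w) * (w - a2 * τ) := by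
    intro w; rw [hadef, hbdef]; ring
  have hsymP : ∀ w : ℝ,
      4 * x * (a + b - w) + (a1 + a2) * ((a1 + a2) * s * τ - 2 * s * (a + b - w) - 2 * τ * x)
      = -(4 * x * w + (a1 + a2) * ((a1 + a2) * s * τ - 2 * s * w - 2 * τ * x)) := by
    intro w; rw [hadef, hbdef]; ring
  have hgrefl : ∀ w : ℝ, gfun lam a1 a2 s τ x (a + b - w) = - gfun lam a1 a2 s τ x w := by
    intro w
    simp only [gfun]
    rw [hsymh w, hsymP w]
    ring
  have hg0 : (∫ w in a..b, gfun lam a1 a2 s τ x w) = 0 :=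
    refl_integral_zero _ hgrefl
  refine ⟨?_, hg0⟩
  -- main normalization
  set A := lam * Real.exp (-u) / (a1 - a2) with hAdef
  clear_value A
  set A' := lam * Real.exp (-u) / (2 * (a1 - a2) ^ 2 * s) with hA'def
  clear_value A'
  set P : ℝ → ℝ := fun w =>
    4 * x * w + (a1 + a2) * ((a1 + a2) * s * τ - 2 * s * w - 2 * τ * x) with hPdef
  clear_value P
  set e0 : ℕ → ℝ := fun k => (c ^ 2 / 4) ^ k / (k.factorial * k.factorial) with he0
  clear_value e0
  set e1 : ℕ → ℝ :=
    fun k => (c / 2) ^ (2 * k + 1) / (k.factorial * (k + 1).factorial) with he1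
  clear_value e1
  have he0nn : ∀ k, 0 ≤ e0 k := by intro k; rw [he0]; positivity
  have he1nn : ∀ k, 0 ≤ e1 k := by intro k; rw [he1]; positivity
  set F : ℕ → ℝ → ℝ := fun k w =>
    (A * e0 k + A * (L / 2) * e1 k) * ((b - w) * (w - a)) ^ k
      + (A' * e1 k) * (P w * ((b - w) * (w - a)) ^ k) with hF
  clear_value F
  -- pointwise expansion on the open interval
  have hpw : Set.EqOn (fun w => tdensity lam a1 a2 τ w + gfun lam a1 a2 s τ x w)
      (fun w => ∑' k, F k w) (Set.Ioo a b) := by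
    intro w hw
    have hbw : 0 < b - w := sub_pos.2 hw.2
    have hwa : 0 < w - a := sub_pos.2 hw.1
    set q := (b - w) * (w - a) with hqdef
    clear_value q
    have hqpos : 0 < q := by rw [hqdef]; exact mul_pos hbw hwa
    have hhw : (a1 * τ - w) * (w - a2 * τ) = q := by
      rw [hqdef, hadef, hbdef]
    have hsq : Real.sqrt q ^ 2 = q := Real.sq_sqrt hqpos.le
    have hsqrtpos : 0 < Real.sqrt q := Real.sqrt_pos.2 hqpos
    have hsq2 : (c * Real.sqrt q / 2) ^ 2 = c ^ 2 / 4 * q := by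
      rw [div_pow, mul_pow, hsq]; ring
    have hI0 : besselI 0 (c * Real.sqrt q) = ∑' k, e0 k * q ^ k := by
      rw [besselI0_eq]
      refine tsum_congr fun k => ?_
      simp only [he0]
      rw [pow_mul, hsq2, mul_pow]
      ring
    have hI1 : besselI 1 (c * Real.sqrt q) / Real.sqrt q = ∑' k, e1 k * q ^ k := by
      rw [besselI1_eq, ← tsum_div_const]
      refine tsum_congr fun k => ?_
      have hp : (c * Real.sqrt q / 2) ^ (2 * k + 1)
          = (c / 2) ^ (2 * k + 1) * q ^ k * Real.sqrt q := by
        rw [pow_succ, pow_mul, hsq2, pow_succ (c / 2), pow_mul,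
          show ((c / 2) ^ 2 : ℝ) = c ^ 2 / 4 by ring, mul_pow]
        ring
      rw [hp]
      simp only [he1]
      field_simp
    have hT : tdensity lam a1 a2 τ w + gfun lam a1 a2 s τ x w
        = A * (besselI 0 (c * Real.sqrt q))
          + A * (L / 2) * (besselI 1 (c * Real.sqrt q) / Real.sqrt q)
          + A' * P w * (besselI 1 (c * Real.sqrt q) / Real.sqrt q) := by
      simp only [tdensity, gfun, hhw]
      simp only [hAdef, hA'def, hPdef, hcdef, hLdef, hudef]
      field_simp
    have hs0 : Summable (fun k => e0 k * q ^ k) := by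
      have heq : (fun k => e0 k * q ^ k)
          = fun k : ℕ => (c ^ 2 / 4 * q) ^ k / (k.factorial * k.factorial) := by
        funext k; simp only [he0]; rw [mul_pow]; ring
      rw [heq]; exact summable_sq_factorial (by positivity)
    have hs1 : Summable (fun k => e1 k * q ^ k) := by
      have heq : (fun k => e1 k * q ^ k)
          = fun k : ℕ => (c / 2) * ((c ^ 2 / 4 * q) ^ k / (k.factorial * (k + 1).factorial)) := by
        funext k
        simp only [he1]
        rw [pow_succ, pow_mul, show ((c / 2) ^ 2 : ℝ) = c ^ 2 / 4 by ring, mul_pow]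
        ring
      rw [heq]; exact (summable_succ_factorial (by positivity)).mul_left _
    have hFsum : ∑' k, F k w = A * (∑' k, e0 k * q ^ k)
        + (A * (L / 2) + A' * P w) * (∑' k, e1 k * q ^ k) := by
      have h1 : ∀ k, F k w
          = A * (e0 k * q ^ k) + (A * (L / 2) + A' * P w) * (e1 k * q ^ k) := by
        intro k; simp only [hF]; rw [← hqdef]; ring
      rw [tsum_congr h1, Summable.tsum_add (hs0.mul_left _) (hs1.mul_left _),
        tsum_mul_left, tsum_mul_left]
    show tdensity lam a1 a2 τ w + gfun lam a1 a2 s τ x w = ∑' k, F k w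
    rw [hT, hI0, hI1, hFsum]
    ring
  -- integrability and bounds
  have hFcont : ∀ k, Continuous (F k) := by
    intro k
    simp only [hF, hPdef]
    fun_prop
  have hFint : ∀ k, Integrable (F k) (volume.restrict (Set.Ioo a b)) := by
    intro k
    exact ((hFcont k).integrableOn_Icc).mono_set Set.Ioo_subset_Icc_self
  set Cp := |4 * x| * (|a| + |b|)
      + |a1 + a2| * (|(a1 + a2) * s * τ| + |2 * s| * (|a| + |b|) + |2 * τ * x|) with hCpdef
  clear_value Cp
  have hCpnn : 0 ≤ Cp := by rw [hCpdef]; positivity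
  have hPb : ∀ w ∈ Set.Ioo a b, |P w| ≤ Cp := by
    intro w hw
    have hwabs : |w| ≤ |a| + |b| := by
      rw [abs_le]
      constructor
      · linarith [neg_abs_le a, abs_nonneg b, hw.1]
      · linarith [le_abs_self b, abs_nonneg a, hw.2]
    simp only [hPdef]
    have t1 : |4 * x * w + (a1 + a2) * ((a1 + a2) * s * τ - 2 * s * w - 2 * τ * x)|
        ≤ |4 * x| * |w| + |a1 + a2| * |(a1 + a2) * s * τ - 2 * s * w - 2 * τ * x| := by
      refine (abs_add_le _ _).trans (le_of_eq ?_)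
      rw [abs_mul (4 * x) w, abs_mul (a1 + a2) ((a1 + a2) * s * τ - 2 * s * w - 2 * τ * x)]
    have t2 : |(a1 + a2) * s * τ - 2 * s * w - 2 * τ * x|
        ≤ |(a1 + a2) * s * τ| + |2 * s| * |w| + |2 * τ * x| := by
      have : (a1 + a2) * s * τ - 2 * s * w - 2 * τ * x
          = (a1 + a2) * s * τ + (-(2 * s * w)) + (-(2 * τ * x)) := by ring
      rw [this]
      refine (abs_add_le _ _).trans ?_
      refine add_le_add ((abs_add_le _ _).trans (add_le_add_right ?_ _)) ?_
      · rw [abs_neg, abs_mul]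
      · rw [abs_neg]
    rw [hCpdef]
    have h3 : |a1 + a2| * |(a1 + a2) * s * τ - 2 * s * w - 2 * τ * x|
        ≤ |a1 + a2| * (|(a1 + a2) * s * τ| + |2 * s| * |w| + |2 * τ * x|) :=
      mul_le_mul_of_nonneg_left t2 (abs_nonneg _)
    have h4 : |4 * x| * |w| ≤ |4 * x| * (|a| + |b|) :=
      mul_le_mul_of_nonneg_left hwabs (abs_nonneg _)
    have h5 : |2 * s| * |w| ≤ |2 * s| * (|a| + |b|) :=
      mul_le_mul_of_nonneg_left hwabs (abs_nonneg _)
    nlinarith [abs_nonneg (a1 + a2)]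
  set D : ℕ → ℝ :=
    fun k => (|A| * e0 k + (|A| * (L / 2) + |A'| * Cp) * e1 k) * (L ^ 2) ^ k with hDdef
  clear_value D
  have hFbound : ∀ k, ∀ w ∈ Set.Ioo a b, |F k w| ≤ D k := by
    intro k w hw
    have hbw : 0 < b - w := sub_pos.2 hw.2
    have hwa : 0 < w - a := sub_pos.2 hw.1
    have hq1 : (0:ℝ) ≤ (b - w) * (w - a) := by positivity
    have hqle : (b - w) * (w - a) ≤ L ^ 2 := by nlinarith [hLab]
    have hkle : ((b - w) * (w - a)) ^ k ≤ (L ^ 2) ^ k := pow_le_pow_left₀ hq1 hqle k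
    have hknn : (0:ℝ) ≤ ((b - w) * (w - a)) ^ k := by positivity
    have step1 : |F k w| ≤ (|A| * e0 k + (|A| * (L / 2) + |A'| * Cp) * e1 k)
        * ((b - w) * (w - a)) ^ k := by
      simp only [hF]
      refine (abs_add_le _ _).trans ?_
      have u1 : |(A * e0 k + A * (L / 2) * e1 k) * ((b - w) * (w - a)) ^ k|
          ≤ (|A| * e0 k + |A| * (L / 2) * e1 k) * ((b - w) * (w - a)) ^ k := by
        rw [abs_mul, abs_of_nonneg hknn]
        refine mul_le_mul_of_nonneg_right ?_ hknn
        refine (abs_add_le _ _).trans (le_of_eq ?_)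
        rw [abs_mul A (e0 k), abs_mul (A * (L / 2)) (e1 k), abs_mul A (L / 2),
          abs_of_nonneg (he0nn k), abs_of_nonneg (he1nn k),
          abs_of_nonneg (by positivity : (0:ℝ) ≤ L / 2)]
      have u2 : |A' * e1 k * (P w * ((b - w) * (w - a)) ^ k)|
          ≤ |A'| * Cp * (e1 k * ((b - w) * (w - a)) ^ k) := by
        have base : |P w| * (e1 k * ((b - w) * (w - a)) ^ k)
            ≤ Cp * (e1 k * ((b - w) * (w - a)) ^ k) :=
          mul_le_mul_of_nonneg_right (hPb w hw)
            (mul_nonneg (he1nn k) hknn)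
        calc |A' * e1 k * (P w * ((b - w) * (w - a)) ^ k)|
            = |A'| * (|P w| * (e1 k * ((b - w) * (w - a)) ^ k)) := by
              rw [abs_mul, abs_mul, abs_mul, abs_of_nonneg (he1nn k), abs_of_nonneg hknn]
              ring
          _ ≤ |A'| * (Cp * (e1 k * ((b - w) * (w - a)) ^ k)) :=
              mul_le_mul_of_nonneg_left base (abs_nonneg A')
          _ = |A'| * Cp * (e1 k * ((b - w) * (w - a)) ^ k) := by ring
      calc |(A * e0 k + A * (L / 2) * e1 k) * ((b - w) * (w - a)) ^ k|
            + |A' * e1 k * (P w * ((b - w) * (w - a)) ^ k)|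
          ≤ (|A| * e0 k + |A| * (L / 2) * e1 k) * ((b - w) * (w - a)) ^ k
            + |A'| * Cp * (e1 k * ((b - w) * (w - a)) ^ k) := add_le_add u1 u2
        _ = (|A| * e0 k + (|A| * (L / 2) + |A'| * Cp) * e1 k) * ((b - w) * (w - a)) ^ k := by
            ring
    refine step1.trans ?_
    simp only [hDdef]
    refine mul_le_mul_of_nonneg_left hkle ?_
    have := he0nn k; have := he1nn k
    positivity
  have hDL : Summable (fun k => D k * L) := by
    have hD1 : ∀ k, D k * L
        = (|A| * L) * ((c ^ 2 * L ^ 2 / 4) ^ k / (k.factorial * k.factorial))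
          + ((|A| * (L / 2) + |A'| * Cp) * (c / 2) * L)
            * ((c ^ 2 * L ^ 2 / 4) ^ k / (k.factorial * (k + 1).factorial)) := by
      intro k
      simp only [hDdef, he0, he1]
      rw [pow_succ (c / 2), pow_mul,
        show ((c / 2) ^ 2 : ℝ) = c ^ 2 / 4 by ring,
        show (c ^ 2 * L ^ 2 / 4 : ℝ) = c ^ 2 / 4 * L ^ 2 by ring, mul_pow]
      ring
    rw [funext hD1]
    exact ((summable_sq_factorial (by positivity)).mul_left _).add
      ((summable_succ_factorial (by positivity)).mul_left _)
  have hnsum : Summable (fun k => ∫ w in Set.Ioo a b, ‖F k w‖) := by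
    refine Summable.of_nonneg_of_le
      (fun k => integral_nonneg (fun w => norm_nonneg _)) (fun k => ?_) hDL
    have hle : (∫ w in Set.Ioo a b, ‖F k w‖) ≤ ∫ _ in Set.Ioo a b, D k := by
      refine setIntegral_mono_on ((hFint k).norm) ?_ measurableSet_Ioo ?_
      · exact integrableOn_const measure_Ioo_lt_top.ne
      · intro w hw
        rw [Real.norm_eq_abs]
        exact hFbound k w hw
    refine hle.trans ?_
    rw [setIntegral_const, measureReal_def, Real.volume_Ioo, smul_eq_mul,
      ENNReal.toReal_ofReal (by linarith : (0:ℝ) ≤ b - a), hLab]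
    exact le_of_eq (mul_comm _ _)
  have hswap := MeasureTheory.integral_tsum_of_summable_integral_norm
    (μ := volume.restrict (Set.Ioo a b)) hFint hnsum
  -- per-term integral
  have hP0 : ∀ k : ℕ, (∫ w in a..b, P w * ((b - w) * (w - a)) ^ k) = 0 := by
    intro k
    refine refl_integral_zero _ (fun w => ?_)
    simp only [hPdef]
    rw [show b - (a + b - w) = w - a by ring, show a + b - w - a = b - w by ring, hsymP w]
    ring
  have hterm : ∀ k : ℕ, (∫ w in Set.Ioo a b, F k w)
      = Real.exp (-u) * (u ^ (2 * k + 1) / (2 * k + 1).factorial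
          + u ^ (2 * k + 2) / (2 * k + 2).factorial) := by
    intro k
    rw [← integral_Ioc_eq_integral_Ioo, ← intervalIntegral.integral_of_le hab.le]
    have hi1 : IntervalIntegrable (fun w => ((b - w) * (w - a)) ^ k) volume a b :=
      (by fun_prop : Continuous fun w : ℝ => ((b - w) * (w - a)) ^ k).intervalIntegrable _ _
    have hi2 : IntervalIntegrable (fun w => P w * ((b - w) * (w - a)) ^ k) volume a b := by
      apply Continuous.intervalIntegrable
      simp only [hPdef]
      fun_prop
    have hsplit : (∫ w in a..b, F k w)
        = (A * e0 k + A * (L / 2) * e1 k) * (∫ w in a..b, ((b - w) * (w - a)) ^ k)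
          + (A' * e1 k) * (∫ w in a..b, P w * ((b - w) * (w - a)) ^ k) := by
      rw [← intervalIntegral.integral_const_mul, ← intervalIntegral.integral_const_mul,
        ← intervalIntegral.integral_add (hi1.const_mul _) (hi2.const_mul _)]
      refine intervalIntegral.integral_congr fun w _ => ?_
      simp only [hF]
    rw [hsplit, hP0 k, mul_zero, add_zero, beta_scaled hab k, hLab]
    -- now pure algebra
    have hk0 : ((k.factorial : ℝ)) ≠ 0 := Nat.cast_ne_zero.mpr k.factorial_ne_zero
    have hk1 : (((k+1).factorial : ℝ)) = (k + 1) * k.factorial := by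
      rw [Nat.factorial_succ]; push_cast; ring
    have h21 : (((2*k+1).factorial : ℝ)) ≠ 0 := Nat.cast_ne_zero.mpr (2*k+1).factorial_ne_zero
    have h22 : (((2*k+2).factorial : ℝ)) = (2*k+2) * (2*k+1).factorial := by
      rw [show 2*k+2 = (2*k+1)+1 from by omega, Nat.factorial_succ]; push_cast; ring
    have hAL : A * L = u * Real.exp (-u) := by
      rw [hAdef, hLdef, hudef]
      field_simp
    have hcu : c = 2 * u / L := by
      rw [eq_div_iff hL.ne']
      linarith [hcL]
    have hA2 : A = u * Real.exp (-u) / L := by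
      rw [eq_div_iff hL.ne']; exact hAL
    simp only [he0, he1]
    rw [hA2, hcu, h22, hk1]
    rw [show (2 * u / L / 2 : ℝ) = u / L by ring,
      show ((2 * u / L) ^ 2 / 4 : ℝ) = u ^ 2 / L ^ 2 by ring]
    rw [div_pow u L, div_pow (u^2) (L^2),
      show L ^ (2 * k + 1) = (L ^ 2) ^ k * L by rw [pow_succ, pow_mul]]
    have hL2k : ((L ^ 2) ^ k : ℝ) ≠ 0 := by positivity
    have hLk : (L ^ (2*k+1) : ℝ) ≠ 0 := by positivity
    field_simp
    ring
  -- assembling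
  have hshift := intervalIntegral.integral_comp_sub_right
    (a := x + a) (b := x + b)
    (fun w => tdensity lam a1 a2 τ w + gfun lam a1 a2 s τ x w) x
  simp only [add_sub_cancel_left] at hshift
  rw [hshift, intervalIntegral.integral_of_le hab.le, integral_Ioc_eq_integral_Ioo,
    setIntegral_congr_fun measurableSet_Ioo hpw, ← hswap, tsum_congr hterm,
    tsum_mul_left, sum_exp_split]
  have hee : Real.exp (-u) * Real.exp u = 1 := by
    rw [← Real.exp_add]; simp
  rw [mul_sub, hee, mul_one]
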